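/- arXiv:2008.04841 — 2 statements merged into one kernel-verified Lean document; each statement's English description precedes it below -/
import Mathlib

section
/- Iterated form: for integers N ≥ 2 and n ≥ 8N, L_n = L_N * (L_{n-N} + (-1)^{N+1} L_{n-3N} + L_{n-5N} + (-1)^{N+1} L_{n-7N}) + L_{n-8N}. -/
/-! By Binet's formula `L n = φ ^ n + ψ ^ n` with `φ ψ = -1`, so for fixed `k` and `N` the sequence
`j ↦ L (k + j N)` satisfies `x (j + 2) = L N * x (j + 1) - (-1) ^ N * x j`, the roots of its
characteristic polynomial being `φ ^ N` and `ψ ^ N`. Unwinding this recurrence four times from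
`j = 8` and using `((-1) ^ N) ^ 2 = 1` gives the identity. -/

def lucas : ℕ → ℕ
  | 0 => 2
  | 1 => 1
  | n + 2 => lucas (n + 1) + lucas n

open Real goldenRatio

theorem lucas_eq_goldenRatio_pow_add_goldenConj_pow (n : ℕ) : (lucas n : ℝ) = φ ^ n + ψ ^ n := by
  induction n using Nat.twoStepInduction with
  | zero => norm_num [lucas]
  | one => simp [lucas, goldenRatio_add_goldenConj]
  | more n ih₀ ih₁ =>
    rw [lucas, Nat.cast_add, ih₀, ih₁, pow_add φ n 2, pow_add ψ n 2, goldenRatio_sq, goldenConj_sq]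
    ring

theorem lucas_add_add_two_mul (k N j : ℕ) :
    (lucas (k + (j + 2) * N) : ℤ) =
      lucas N * lucas (k + (j + 1) * N) - (-1) ^ N * lucas (k + j * N) := by
  apply Int.cast_injective (α := ℝ)
  have h : ((-1 : ℝ)) ^ N = φ ^ N * ψ ^ N := by rw [← mul_pow, goldenRatio_mul_goldenConj]
  push_cast
  simp only [lucas_eq_goldenRatio_pow_add_goldenConj_pow, h]
  ring

theorem iterated_four_general (N n : ℕ) (hn : 8 * N ≤ n) :
    (lucas n : ℤ) =
      (lucas N : ℤ) *
          ((lucas (n - N) : ℤ) + (-1 : ℤ) ^ (N + 1) * lucas (n - 3 * N) +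
            (lucas (n - 5 * N) : ℤ) + (-1 : ℤ) ^ (N + 1) * lucas (n - 7 * N)) +
        (lucas (n - 8 * N) : ℤ) := by
  obtain ⟨k, rfl⟩ : ∃ k, n = k + 8 * N := ⟨n - 8 * N, by omega⟩
  rw [show k + 8 * N - N = k + 7 * N by omega, show k + 8 * N - 3 * N = k + 5 * N by omega,
    show k + 8 * N - 5 * N = k + 3 * N by omega, show k + 8 * N - 7 * N = k + N by omega,
    show k + 8 * N - 8 * N = k by omega]
  have h₈ := lucas_add_add_two_mul k N 6
  have h₆ := lucas_add_add_two_mul k N 4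
  have h₄ := lucas_add_add_two_mul k N 2
  have h₂ := lucas_add_add_two_mul k N 0
  norm_num at h₈ h₆ h₄ h₂
  set s : ℤ := (-1) ^ N
  have hs : s ^ 2 = 1 := by rw [← pow_mul, mul_comm, pow_mul, neg_one_sq, one_pow]
  linear_combination h₈ - s * h₆ + s ^ 2 * h₄ - s ^ 3 * h₂ +
    (lucas N * lucas (k + 3 * N) - s * lucas N * lucas (k + N) + (s ^ 2 + 1) * lucas k) * hs

theorem iterated_four (N n : ℕ) (hN : 2 ≤ N) (hn : 8 * N ≤ n) :
    (lucas n : ℤ) =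
      (lucas N : ℤ) *
          ((lucas (n - N) : ℤ) + (-1 : ℤ) ^ (N + 1) * lucas (n - 3 * N) +
            (lucas (n - 5 * N) : ℤ) + (-1 : ℤ) ^ (N + 1) * lucas (n - 7 * N)) +
        (lucas (n - 8 * N) : ℤ) :=
  iterated_four_general N n hn
end

section
/- Lacunary recurrence for Gibonacci sequences: let G_0, G_1 ∈ ℤ and G_n = G_{n-1}+G_{n-2}. For integers N ≥ 2 and n ≥ 2N, with d = ⌊⌊n/N⌋/2⌋, G_n = L_N * Σ_{i=1}^{d} (-1)^{(N+1)(i+1)} G_{n-(2i-1)N} + (-1)^{(N+1)(d+2)} G_{n-2dN}. -/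
section Gibonacci

variable {R : Type*} [CommRing R] {G : ℕ → R}

theorem lucas_mul_gibonacci (hG : ∀ n, G (n + 2) = G (n + 1) + G n) (N m : ℕ) :
    (lucas N : R) * G (m + N) = G (m + 2 * N) + (-1) ^ N * G m := by
  induction N using Nat.twoStepInduction generalizing m with
  | zero => norm_num [lucas]; ring
  | one => simp [lucas, hG]
  | more N ih₀ ih₁ =>
    have h₀ := ih₀ (m + 2)
    have h₁ := ih₁ (m + 1)
    have h₂ := hG (m + 2 * N + 2)
    have h₃ := hG m
    simp only [lucas, Nat.cast_add]
    ring_nf at h₀ h₁ h₂ h₃ ⊢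
    linear_combination h₀ + h₁ - h₂ + (-1) ^ N * h₃

theorem gibonacci_add_two_mul (hG : ∀ n, G (n + 2) = G (n + 1) + G n) (N m : ℕ) :
    G (m + 2 * N) = lucas N * G (m + N) + (-1) ^ (N + 1) * G m := by
  rw [lucas_mul_gibonacci hG, pow_succ]
  ring

end Gibonacci

theorem eq_sum_Icc_of_add_two_mul {R : Type*} [CommSemiring R] {G : ℕ → R} {N : ℕ} {c s : R}
    (hG : ∀ m, G (m + 2 * N) = c * G (m + N) + s * G m) {k n : ℕ} (hkn : 2 * k * N ≤ n) :
    G n = c * ∑ i ∈ Finset.Icc 1 k, s ^ (i - 1) * G (n - (2 * i - 1) * N) +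
      s ^ k * G (n - 2 * k * N) := by
  induction k with
  | zero => simp
  | succ k ih =>
    have hstep := hG (n - 2 * (k + 1) * N)
    have hexpand : 2 * (k + 1) * N = 2 * k * N + 2 * N := by ring
    have hodd : (2 * (k + 1) - 1) * N = 2 * k * N + N := by
      rw [show 2 * (k + 1) - 1 = 2 * k + 1 by omega]; ring
    rw [show n - 2 * (k + 1) * N + 2 * N = n - 2 * k * N by omega,
      show n - 2 * (k + 1) * N + N = n - (2 * (k + 1) - 1) * N by omega] at hstep
    rw [ih (by omega), hstep, Finset.sum_Icc_succ_top (by omega), Nat.add_sub_cancel]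
    ring

theorem two_mul_div_div_mul_le (n N : ℕ) : 2 * (n / N / 2) * N ≤ n := by
  rw [Nat.div_div_eq_div_mul, mul_comm 2, mul_assoc, mul_comm 2]
  exact Nat.div_mul_le_self n (N * 2)

theorem gibonacci_lacunary_general (G : ℕ → ℤ) (hG : ∀ n, G (n + 2) = G (n + 1) + G n)
    (N n : ℕ) :
    G n =
      (lucas N : ℤ) *
          ∑ i ∈ Finset.Icc 1 (n / N / 2),
            (-1 : ℤ) ^ ((N + 1) * (i + 1)) * G (n - (2 * i - 1) * N) +
        (-1 : ℤ) ^ ((N + 1) * (n / N / 2 + 2)) * G (n - 2 * (n / N / 2) * N) := by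
  have hs : ((-1 : ℤ) ^ (N + 1)) ^ 2 = 1 := by
    rw [← pow_mul, mul_comm, pow_mul, neg_one_sq, one_pow]
  have h := eq_sum_Icc_of_add_two_mul (gibonacci_add_two_mul hG N) (two_mul_div_div_mul_le n N)
  simp only [pow_mul]
  rw [pow_add _ _ 2, hs, mul_one]
  convert h using 3
  refine Finset.sum_congr rfl fun i hi => ?_
  rw [show i + 1 = i - 1 + 2 by grind, pow_add, hs, mul_one]

theorem gibonacci_lacunary (G : ℕ → ℤ) (hG : ∀ n, G (n + 2) = G (n + 1) + G n)
    (N n : ℕ) (hN : 2 ≤ N) (hn : 2 * N ≤ n) :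
    G n =
      (lucas N : ℤ) *
          ∑ i ∈ Finset.Icc 1 (n / N / 2),
            (-1 : ℤ) ^ ((N + 1) * (i + 1)) * G (n - (2 * i - 1) * N) +
        (-1 : ℤ) ^ ((N + 1) * (n / N / 2 + 2)) * G (n - 2 * (n / N / 2) * N) :=
  gibonacci_lacunary_general G hG N n
end
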